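/- arXiv:2311.01246 — 2 statements merged into one kernel-verified Lean document; each statement's English description precedes it below -/
import Mathlib

section
/- Let u be the solution to the obstacle problem in K_{ψ,ϑ}(Ω, Ω'). If B_R = B_R(x₀) ⊂ Ω is a ball with essinf_{B_R}(u − ψ) > 0, then u is a weak solution of Lu = 0 in B_R. In particular, if u is lower semicontinuous in Ω and ψ is upper semicontinuous in Ω, then u is a weak solution of Lu = 0 in the open set {x ∈ Ω : u(x) > ψ(x)}. -/
open MeasureTheory Metric Set Filter Function
open scoped ENNReal Topology NNReal

noncomputable section

/-- Euclidean space `ℝⁿ`. -/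
abbrev Rn (n : ℕ) : Type := EuclideanSpace ℝ (Fin n)

variable {n : ℕ}

/-- Fractional difference quotient `D^σ u (x,y) = (u x − u y)/|x−y|^σ`. -/
def fracD (σ : ℝ) (u : Rn n → ℝ) (x y : Rn n) : ℝ := (u x - u y) / dist x y ^ σ

/-- The odd extension `t ↦ sgn(t) · g(|t|)` (interpreted as `0` at `t = 0`). -/
def oddg (g : ℝ → ℝ) (t : ℝ) : ℝ := Real.sign t * g |t|

/-- Positive part `u₊`. -/
def uPlus (u : Rn n → ℝ) : Rn n → ℝ := fun x => max (u x) 0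

/-- Negative part `u₋`. -/
def uMinus (u : Rn n → ℝ) : Rn n → ℝ := fun x => max (-u x) 0

/-- Assumptions on the Young function data `(g, G, p, q)`:
`g` is nonnegative, strictly increasing and left-continuous on `[0,∞)`,
`G(t) = ∫₀ᵗ g`, `1 < p ≤ q`, `p·G(t) ≤ t·g(t) ≤ q·G(t)` and `G(1) = 1`. -/
structure YoungOK (g G : ℝ → ℝ) (p q : ℝ) : Prop where
  one_lt_p : 1 < p
  p_le_q : p ≤ q
  g_nonneg : ∀ t, 0 ≤ t → 0 ≤ g t
  g_strictMono : StrictMonoOn g (Ici 0)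
  g_leftCont : ∀ t, 0 < t → Tendsto g (𝓝[<] t) (𝓝 (g t))
  G_eq : ∀ t, 0 ≤ t → G t = ∫ τ in (0:ℝ)..t, g τ
  growth_lower : ∀ t, 0 ≤ t → p * G t ≤ t * g t
  growth_upper : ∀ t, 0 ≤ t → t * g t ≤ q * G t
  G_one : G 1 = 1

/-- Assumptions on the kernel `k`: measurable, symmetric, with `Λ⁻¹ ≤ k ≤ Λ` a.e. -/
structure KernelOK (k : Rn n → Rn n → ℝ) (Λ : ℝ) : Prop where
  one_le : 1 ≤ Λ
  measurable : Measurable (Function.uncurry k)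
  symm : ∀ x y, k x y = k y x
  bounds : ∀ᵐ z : Rn n × Rn n, Λ⁻¹ ≤ k z.1 z.2 ∧ k z.1 z.2 ≤ Λ

/-- Membership in the tail space `L^g_s(ℝⁿ)`. -/
def memLgs (g : ℝ → ℝ) (s : ℝ) (u : Rn n → ℝ) : Prop :=
  (∫⁻ x : Rn n,
    ENNReal.ofReal (g (|u x| / (1 + ‖x‖) ^ s) / (1 + ‖x‖) ^ ((n : ℝ) + s))) < ⊤

/-- Membership in `W^{s,G}_loc(Ω)`. -/
def memWsGloc (G : ℝ → ℝ) (s : ℝ) (Ω : Set (Rn n)) (u : Rn n → ℝ) : Prop :=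
  ∀ D : Set (Rn n), IsOpen D → IsCompact (closure D) → closure D ⊆ Ω →
    (∫⁻ x in D, ENNReal.ofReal (G |u x|)) < ⊤ ∧
    (∫⁻ x in D, ∫⁻ y in D, ENNReal.ofReal (G |fracD s u x y| / dist x y ^ n)) < ⊤

/-- `u` is a weak supersolution of `Lu = 0` in `Ω`. -/
def IsSupersolution (g G : ℝ → ℝ) (k : Rn n → Rn n → ℝ) (s : ℝ)
    (Ω : Set (Rn n)) (u : Rn n → ℝ) : Prop :=
  memWsGloc G s Ω u ∧ memLgs g s (uMinus u) ∧
  ∀ φ : Rn n → ℝ, ContDiff ℝ (⊤ : ℕ∞) φ → HasCompactSupport φ → tsupport φ ⊆ Ω →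
    (∀ x, 0 ≤ φ x) →
    0 ≤ ∫ x : Rn n, ∫ y : Rn n,
          oddg g (fracD s u x y) * fracD s φ x y * k x y / dist x y ^ n

/-- `u` is a weak subsolution of `Lu = 0` in `Ω`, i.e. `−u` is a supersolution. -/
def IsSubsolution (g G : ℝ → ℝ) (k : Rn n → Rn n → ℝ) (s : ℝ)
    (Ω : Set (Rn n)) (u : Rn n → ℝ) : Prop :=
  IsSupersolution g G k s Ω (fun x => -u x)

/-- `u` is a weak solution of `Lu = 0` in `Ω`. -/
def IsWeakSolution (g G : ℝ → ℝ) (k : Rn n → Rn n → ℝ) (s : ℝ)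
    (Ω : Set (Rn n)) (u : Rn n → ℝ) : Prop :=
  IsSupersolution g G k s Ω u ∧ IsSubsolution g G k s Ω u

/-- The quantity `T(u; x₀, R) = R^s ∫_{ℝⁿ∖B_R(x₀)} g(|u|/|x−x₀|^s)|x−x₀|^{−n−s} dx`. -/
def tailInt (g : ℝ → ℝ) (s : ℝ) (u : Rn n → ℝ) (x₀ : Rn n) (R : ℝ) : ℝ :=
  R ^ s * ∫ x in (ball x₀ R)ᶜ, g (|u x| / dist x x₀ ^ s) / dist x x₀ ^ ((n : ℝ) + s)

/-- The nonlocal tail `Tail_g(u; x₀, R) = R^s · g⁻¹(T(u; x₀, R))`. -/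
def tailG (g : ℝ → ℝ) (s : ℝ) (u : Rn n → ℝ) (x₀ : Rn n) (R : ℝ) : ℝ :=
  R ^ s * Function.invFun g (tailInt g s u x₀ R)

/-- Membership in `W^{s,G}(Ω, Ω')`. -/
def memWsG2 (G : ℝ → ℝ) (s : ℝ) (Ω Ω' : Set (Rn n)) (u : Rn n → ℝ) : Prop :=
  (∫⁻ x in Ω, ENNReal.ofReal (G |u x|)) < ⊤ ∧
  (∫⁻ x in Ω, ∫⁻ y in Ω', ENNReal.ofReal (G |fracD s u x y| / dist x y ^ n)) < ⊤

/-- The (Luxemburg-type) norm of `W^{s,G}(Ω, Ω')`. -/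
def luxNorm (G : ℝ → ℝ) (s : ℝ) (Ω Ω' : Set (Rn n)) (u : Rn n → ℝ) : ℝ :=
  sInf {lam : ℝ | 0 < lam ∧ (∫⁻ x in Ω, ENNReal.ofReal (G (|u x| / lam))) ≤ 1} +
  sInf {lam : ℝ | 0 < lam ∧
    (∫⁻ x in Ω, ∫⁻ y in Ω',
      ENNReal.ofReal (G (|fracD s u x y| / lam) / dist x y ^ n)) ≤ 1}

/-- Membership in `W^{s,G}_0(Ω, Ω')`, the closure of `C_c^∞(Ω)` in `W^{s,G}(Ω, Ω')`. -/
def memWsG20 (G : ℝ → ℝ) (s : ℝ) (Ω Ω' : Set (Rn n)) (u : Rn n → ℝ) : Prop :=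
  memWsG2 G s Ω Ω' u ∧
  ∀ ε : ℝ, 0 < ε → ∃ φ : Rn n → ℝ, ContDiff ℝ (⊤ : ℕ∞) φ ∧ HasCompactSupport φ ∧
    tsupport φ ⊆ Ω ∧ luxNorm G s Ω Ω' (fun x => u x - φ x) < ε

/-- The nonlocal energy form `E(u, w)`. -/
def nlEnergy (g : ℝ → ℝ) (k : Rn n → Rn n → ℝ) (s : ℝ) (u w : Rn n → ℝ) : ℝ :=
  ∫ x : Rn n, ∫ y : Rn n, oddg g (fracD s u x y) * fracD s w x y * k x y / dist x y ^ n

/-- Membership in the admissible class `K_{ψ,ϑ}(Ω, Ω')` (functions extended by `ϑ`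
outside `Ω'`). -/
def inAdmissible (G : ℝ → ℝ) (s : ℝ) (Ω Ω' : Set (Rn n)) (ψ : Rn n → EReal)
    (ϑ u : Rn n → ℝ) : Prop :=
  memWsG2 G s Ω Ω' u ∧
  (∀ᵐ x ∂(volume.restrict Ω), ψ x ≤ (u x : EReal)) ∧
  memWsG20 G s Ω Ω' (fun x => u x - ϑ x) ∧
  ∀ x, x ∉ Ω' → u x = ϑ x

/-- `u` is a solution to the obstacle problem in `K_{ψ,ϑ}(Ω, Ω')`. -/
def SolvesObstacle (g G : ℝ → ℝ) (k : Rn n → Rn n → ℝ) (s : ℝ)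
    (Ω Ω' : Set (Rn n)) (ψ : Rn n → EReal) (ϑ : Rn n → ℝ) (u : Rn n → ℝ) : Prop :=
  inAdmissible G s Ω Ω' ψ ϑ u ∧
  ∀ v : Rn n → ℝ, inAdmissible G s Ω Ω' ψ ϑ v →
    0 ≤ nlEnergy g k s u (fun x => v x - u x)

/-- The weak formulation `∫∫ g(|D^s u|)·sgn(D^s u)·D^s φ·k/|x−y|ⁿ = 0` for
all `φ ∈ C_c^∞(D)`. -/
def IsWeakSolEq (g : ℝ → ℝ) (k : Rn n → Rn n → ℝ) (s : ℝ)
    (D : Set (Rn n)) (u : Rn n → ℝ) : Prop :=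
  ∀ φ : Rn n → ℝ, ContDiff ℝ (⊤ : ℕ∞) φ → HasCompactSupport φ → tsupport φ ⊆ D →
    (∫ x : Rn n, ∫ y : Rn n,
        oddg g (fracD s u x y) * fracD s φ x y * k x y / dist x y ^ n) = 0

/-- `u : ℝⁿ → [−∞,∞]` is `L`-superharmonic in `Ω`. -/
def IsSuperharmonic (g G : ℝ → ℝ) (k : Rn n → Rn n → ℝ) (s : ℝ)
    (Ω : Set (Rn n)) (u : Rn n → EReal) : Prop :=
  (∀ᵐ x : Rn n, u x < ⊤) ∧ (∀ x ∈ Ω, ⊥ < u x) ∧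
  LowerSemicontinuousOn u Ω ∧
  (∀ D : Set (Rn n), IsOpen D → IsCompact (closure D) → closure D ⊆ Ω →
    ∀ v : Rn n → ℝ, ContinuousOn v (closure D) → IsWeakSolution g G k s D v →
      (∃ M : ℝ, ∀ᵐ x : Rn n, v x ≤ M) →
      (∀ x ∈ frontier D, (v x : EReal) ≤ u x) →
      (∀ᵐ x : Rn n, x ∉ D → (v x : EReal) ≤ u x) →
      ∀ x ∈ D, (v x : EReal) ≤ u x) ∧
  (∀ᵐ x : Rn n, ⊥ < u x) ∧
  memLgs g s (fun x => max (-(u x).toReal) 0)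

/-- `essliminf_{y → x} u(y) = lim_{r → 0} essinf_{B_r(x)} u`. -/
def essLiminfAt (u : Rn n → EReal) (x : Rn n) : EReal :=
  ⨆ r ∈ Ioi (0:ℝ), essInf u (volume.restrict (ball x r))

/-- The measure density condition for a set `E` with parameters `R₀, δ`. -/
def MeasureDensityCond (E : Set (Rn n)) (R₀ δ : ℝ) : Prop :=
  ∀ x₀ ∈ frontier E, ∀ R : ℝ, 0 < R → R < R₀ →
    ENNReal.ofReal δ * volume (ball x₀ R) ≤ volume (E ∩ ball x₀ R)

/-- `v` is locally Hölder continuous in `Ω`. -/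
def LocallyHolderOn (v : Rn n → ℝ) (Ω : Set (Rn n)) : Prop :=
  ∀ x ∈ Ω, ∃ r : ℝ, 0 < r ∧ ∃ C α : ℝ≥0, 0 < α ∧ HolderOnWith C α v (ball x r ∩ Ω)

section AuxLemmas
variable {n : ℕ}
namespace YoungOK
variable {g G : ℝ → ℝ} {p q : ℝ} (hY : YoungOK g G p q)
include hY

lemma one_lt_q : 1 < q := lt_of_lt_of_le hY.one_lt_p hY.p_le_q

lemma g_mono : MonotoneOn g (Ici 0) := hY.g_strictMono.monotoneOn

lemma g_intble {a b : ℝ} (ha : 0 ≤ a) (hb : 0 ≤ b) : IntervalIntegrable g volume a b := by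
  apply MonotoneOn.intervalIntegrable
  intro x hx y hy hxy
  have h0 : (0:ℝ) ≤ min a b := le_min ha hb
  exact hY.g_mono (le_trans h0 (by simpa [uIcc] using hx.1))
    (le_trans h0 (by simpa [uIcc] using hy.1)) hxy

lemma G_nonneg {t : ℝ} (ht : 0 ≤ t) : 0 ≤ G t := by
  rw [hY.G_eq t ht]
  apply intervalIntegral.integral_nonneg ht
  intro x hx; exact hY.g_nonneg x hx.1

lemma G_zero : G 0 = 0 := by rw [hY.G_eq 0 le_rfl, intervalIntegral.integral_same]

lemma G_monoOn : MonotoneOn G (Ici 0) := by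
  intro a ha b hb hab
  rw [hY.G_eq a ha, hY.G_eq b hb]
  rw [← intervalIntegral.integral_add_adjacent_intervals (b := a)
    (hY.g_intble le_rfl ha) (hY.g_intble ha hb)]
  have h2 : 0 ≤ ∫ τ in a..b, g τ :=
    intervalIntegral.integral_nonneg hab (fun x hx => hY.g_nonneg x (le_trans ha hx.1))
  linarith

lemma G_le_mul {t : ℝ} (ht : 0 ≤ t) : G t ≤ t * g t := by
  have h1 := hY.growth_lower t ht
  have h2 := hY.G_nonneg ht
  nlinarith [hY.one_lt_p]

lemma G_step {t : ℝ} (ht : 0 ≤ t) :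
    G ((2*q/(2*q-1)) * t) ≤ 2 * G t := by
  set l : ℝ := 2*q/(2*q-1) with hl
  have hq := hY.one_lt_q
  have hden : (0:ℝ) < 2*q-1 := by linarith
  have hl1 : 1 < l := by rw [hl, lt_div_iff₀ hden]; linarith
  have hlt : 0 ≤ l * t := mul_nonneg (by linarith) ht
  have hstep : G (l*t) - G t = ∫ τ in t..(l*t), g τ := by
    rw [hY.G_eq t ht, hY.G_eq (l*t) hlt]
    rw [← intervalIntegral.integral_add_adjacent_intervals (b := t)
      (hY.g_intble le_rfl ht) (hY.g_intble ht hlt)]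
    ring
  have hbound : (∫ τ in t..(l*t), g τ) ≤ (l*t - t) * g (l*t) := by
    have ht' : t ≤ l*t := le_mul_of_one_le_left ht hl1.le
    calc (∫ τ in t..(l*t), g τ) ≤ ∫ τ in t..(l*t), g (l*t) := by
          apply intervalIntegral.integral_mono_on ht' (hY.g_intble ht hlt)
            intervalIntegrable_const
          intro x hx
          exact hY.g_mono (le_trans ht hx.1) hlt hx.2
      _ = (l*t - t) * g (l*t) := by rw [intervalIntegral.integral_const, smul_eq_mul]
  have h2 := hY.growth_upper (l*t) hlt
  have hg := hY.g_nonneg (l*t) hlt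
  -- (l-1)*t*g(lt) ≤ G(lt)/2  since 2q(l-1)=l
  have hkey : 2*q*(l - 1) = l := by
    have hlm : l * (2*q-1) = 2*q := by rw [hl]; exact div_mul_cancel₀ _ hden.ne'
    linear_combination hlm
  nlinarith [hY.G_nonneg hlt, hY.G_nonneg ht]

lemma G_pow_step : ∀ (m : ℕ) {t : ℝ}, 0 ≤ t → G ((2*q/(2*q-1))^m * t) ≤ 2^m * G t := by
  intro m
  induction m with
  | zero => intro t ht; simp
  | succ m ih =>
      intro t ht
      have hq := hY.one_lt_q
      have hden : (0:ℝ) < 2*q-1 := by linarith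
      have hl0 : (0:ℝ) ≤ 2*q/(2*q-1) := by positivity
      have h1 : (2*q/(2*q-1))^(m+1) * t = (2*q/(2*q-1)) * ((2*q/(2*q-1))^m * t) := by ring
      rw [h1]
      calc G ((2*q/(2*q-1)) * ((2*q/(2*q-1))^m * t)) ≤ 2 * G ((2*q/(2*q-1))^m * t) :=
            hY.G_step (mul_nonneg (pow_nonneg hl0 m) ht)
        _ ≤ 2 * (2^m * G t) := by linarith [ih ht]
        _ = 2^(m+1) * G t := by ring

lemma exists_doubling : ∃ C : ℝ, 1 ≤ C ∧ ∀ t, 0 ≤ t → G (2*t) ≤ C * G t := by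
  have hq := hY.one_lt_q
  have hden : (0:ℝ) < 2*q-1 := by linarith
  have hl1 : 1 < 2*q/(2*q-1) := by rw [lt_div_iff₀ hden]; linarith
  obtain ⟨m, hm⟩ := pow_unbounded_of_one_lt (2:ℝ) hl1
  refine ⟨2^m, one_le_pow₀ one_le_two, fun t ht => ?_⟩
  calc G (2*t) ≤ G ((2*q/(2*q-1))^m * t) := by
        apply hY.G_monoOn (mem_Ici.2 (by positivity)) (mem_Ici.2 (by positivity))
        exact mul_le_mul_of_nonneg_right hm.le ht
    _ ≤ 2^m * G t := hY.G_pow_step m ht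

lemma G_add_le {C : ℝ} (hC : ∀ t, 0 ≤ t → G (2*t) ≤ C * G t) (hC1 : 1 ≤ C)
    {a b : ℝ} (ha : 0 ≤ a) (hb : 0 ≤ b) : G (a + b) ≤ C * G a + C * G b := by
  rcases le_total a b with h | h
  · have h1 : G (a+b) ≤ G (2*b) := hY.G_monoOn (mem_Ici.2 (by linarith)) (mem_Ici.2 (by linarith)) (by linarith)
    have h2 := hC b hb
    have h3 : 0 ≤ C * G a := mul_nonneg (by linarith) (hY.G_nonneg ha)
    linarith
  · have h1 : G (a+b) ≤ G (2*a) := hY.G_monoOn (mem_Ici.2 (by linarith)) (mem_Ici.2 (by linarith)) (by linarith)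
    have h2 := hC a ha
    have h3 : 0 ≤ C * G b := mul_nonneg (by linarith) (hY.G_nonneg hb)
    linarith

end YoungOK



lemma lint_rpow_ball_lt_top (hn : 1 ≤ n) {β ρ : ℝ} (hβ0 : 0 < β) (hβn : β < n) (hρ : 0 < ρ) :
    ∫⁻ z in ball (0 : Rn n) ρ, ENNReal.ofReal (‖z‖ ^ (-β)) < ⊤ := by
  haveI : Nonempty (Fin n) := ⟨⟨0, hn⟩⟩
  set A : ℕ → Set (Rn n) := fun j => {z | ρ * (1/2)^(j+1) ≤ ‖z‖} ∩ ball 0 (ρ * (1/2)^j) with hA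
  -- ball minus origin is covered by the shells
  have hcover : ball (0 : Rn n) ρ \ {0} ⊆ ⋃ j, A j := by
    rintro z ⟨hz1, hz2⟩
    have hz0 : 0 < ‖z‖ := by
      simpa [norm_pos_iff] using hz2
    have hzρ : ‖z‖ < ρ := by simpa [mem_ball_zero_iff] using hz1
    have hex : ∃ m : ℕ, ρ * (1/2)^(m+1) ≤ ‖z‖ := by
      obtain ⟨m, hm⟩ := exists_pow_lt_of_lt_one (div_pos hz0 hρ) (by norm_num : (1/2:ℝ) < 1)
      refine ⟨m, ?_⟩
      have : ((1:ℝ)/2)^(m+1) ≤ (1/2)^m := by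
        apply pow_le_pow_of_le_one (by norm_num) (by norm_num); omega
      have h2 : ρ * (1/2)^m < ‖z‖ := by
        rw [← lt_div_iff₀' hρ]; exact hm
      nlinarith
    set j := Nat.find hex with hj
    have hspec : ρ * (1/2)^(j+1) ≤ ‖z‖ := Nat.find_spec hex
    have hupper : ‖z‖ < ρ * (1/2)^j := by
      rcases Nat.eq_zero_or_pos j with h0 | hpos
      · rw [h0]; simpa using hzρ
      · have hmin := Nat.find_min hex (m := j - 1) (by omega)
        push_neg at hmin
        have he : j - 1 + 1 = j := by omega
        rwa [he] at hmin
    exact mem_iUnion.2 ⟨j, ⟨hspec, by simpa [mem_ball_zero_iff] using hupper⟩⟩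
  have hmeasA : ∀ j, MeasurableSet (A j) := by
    intro j
    exact (measurableSet_le measurable_const measurable_norm).inter measurableSet_ball
  -- bound each shell integral
  have hshell : ∀ j : ℕ, ∫⁻ z in A j, ENNReal.ofReal (‖z‖ ^ (-β)) ≤
      ENNReal.ofReal ((ρ * (1/2)^(j+1)) ^ (-β)) *
        (ENNReal.ofReal ((ρ * (1/2)^j) ^ n) * volume (ball (0:Rn n) 1)) := by
    intro j
    have hr1 : (0:ℝ) < ρ * (1/2)^(j+1) := by positivity
    calc ∫⁻ z in A j, ENNReal.ofReal (‖z‖ ^ (-β))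
        ≤ ∫⁻ _ in A j, ENNReal.ofReal ((ρ * (1/2)^(j+1)) ^ (-β)) := by
          apply setLIntegral_mono' (hmeasA j)
          intro z hz
          apply ENNReal.ofReal_le_ofReal
          have h1 : ρ * (1/2)^(j+1) ≤ ‖z‖ := hz.1
          have h2 : (ρ * (1/2)^(j+1)) ^ β ≤ ‖z‖ ^ β :=
            Real.rpow_le_rpow hr1.le h1 hβ0.le
          rw [Real.rpow_neg hr1.le, Real.rpow_neg (norm_nonneg z)]
          exact inv_anti₀ (Real.rpow_pos_of_pos hr1 β) h2
      _ = ENNReal.ofReal ((ρ * (1/2)^(j+1)) ^ (-β)) * volume (A j) := setLIntegral_const _ _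
      _ ≤ ENNReal.ofReal ((ρ * (1/2)^(j+1)) ^ (-β)) *
            (ENNReal.ofReal ((ρ * (1/2)^j) ^ n) * volume (ball (0:Rn n) 1)) := by
          apply mul_le_mul_right
          have : volume (A j) ≤ volume (ball (0:Rn n) (ρ * (1/2)^j)) :=
            measure_mono inter_subset_right
          rwa [Measure.addHaar_ball volume _ (by positivity : (0:ℝ) ≤ ρ * (1/2)^j),
            finrank_euclideanSpace_fin] at this
  -- sum the bounds: geometric series
  set r : ℝ := (1/2:ℝ) ^ (-β) * (1/2:ℝ)^(n:ℕ) with hr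
  have hr0 : 0 ≤ r := by positivity
  have hr1 : r < 1 := by
    rw [hr, ← Real.rpow_natCast (1/2 : ℝ) n, ← Real.rpow_add (by norm_num : (0:ℝ) < 1/2)]
    exact Real.rpow_lt_one (by norm_num) (by norm_num) (by linarith)
  set C0 : ℝ := ρ ^ (-β) * (1/2:ℝ)^(-β) * ρ ^ (n:ℕ) with hC0
  have hterm : ∀ j : ℕ, (ρ * (1/2)^(j+1)) ^ (-β) * (ρ * (1/2)^j) ^ (n:ℕ) = C0 * r ^ j := by
    intro j
    have e1 : (ρ * (1/2)^(j+1)) ^ (-β) = ρ ^ (-β) * ((1/2:ℝ)^(j+1)) ^ (-β) :=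
      Real.mul_rpow hρ.le (by positivity)
    have e2 : ((1/2:ℝ)^(j+1)) ^ (-β) = ((1/2:ℝ) ^ (-β))^(j+1) := by
      rw [← Real.rpow_natCast (1/2 : ℝ) (j+1), ← Real.rpow_mul (by norm_num : (0:ℝ) ≤ 1/2),
        mul_comm, Real.rpow_mul (by norm_num : (0:ℝ) ≤ 1/2), Real.rpow_natCast]
    rw [e1, e2, mul_pow]
    rw [hC0, hr]
    ring
  calc ∫⁻ z in ball (0 : Rn n) ρ, ENNReal.ofReal (‖z‖ ^ (-β))
      = ∫⁻ z in ball (0 : Rn n) ρ \ {0}, ENNReal.ofReal (‖z‖ ^ (-β)) := by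
        rw [Measure.restrict_congr_set (diff_ae_eq_self.2 (by
          exact measure_mono_null inter_subset_right (measure_singleton 0)))]
    _ ≤ ∫⁻ z in ⋃ j, A j, ENNReal.ofReal (‖z‖ ^ (-β)) :=
        lintegral_mono' (Measure.restrict_mono hcover le_rfl) le_rfl
    _ ≤ ∑' j, ∫⁻ z in A j, ENNReal.ofReal (‖z‖ ^ (-β)) := lintegral_iUnion_le _ _
    _ ≤ ∑' j : ℕ, ENNReal.ofReal ((ρ * (1/2)^(j+1)) ^ (-β)) *
          (ENNReal.ofReal ((ρ * (1/2)^j) ^ n) * volume (ball (0:Rn n) 1)) :=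
        ENNReal.tsum_le_tsum hshell
    _ = ∑' j : ℕ, ENNReal.ofReal (C0 * r ^ j) * volume (ball (0:Rn n) 1) := by
        congr 1; funext j
        rw [← mul_assoc, ← ENNReal.ofReal_mul (by positivity), hterm j]
    _ = ENNReal.ofReal C0 * volume (ball (0:Rn n) 1) * ∑' j : ℕ, (ENNReal.ofReal r) ^ j := by
        rw [← ENNReal.tsum_mul_left]
        congr 1; funext j
        rw [ENNReal.ofReal_mul (show (0:ℝ) ≤ C0 by positivity), ENNReal.ofReal_pow hr0]
        ring
    _ < ⊤ := by
        apply ENNReal.mul_lt_top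
        · exact ENNReal.mul_lt_top ENNReal.ofReal_lt_top measure_ball_lt_top
        · rw [ENNReal.tsum_geometric]
          apply ENNReal.inv_lt_top.2
          rw [tsub_pos_iff_lt]
          exact ENNReal.ofReal_lt_one.2 hr1

lemma lint_rpow_ball_dist (x : Rn n) {ρ β : ℝ} :
    ∫⁻ y in ball x ρ, ENNReal.ofReal (dist x y ^ (-β)) =
      ∫⁻ z in ball (0 : Rn n) ρ, ENNReal.ofReal (‖z‖ ^ (-β)) := by
  have h1 : ∀ y : Rn n, (ball x ρ).indicator (fun y => ENNReal.ofReal (dist x y ^ (-β))) y =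
      (ball (0:Rn n) ρ).indicator (fun z => ENNReal.ofReal (‖z‖ ^ (-β))) (y + (-x)) := by
    intro y
    classical
    have hmem : y ∈ ball x ρ ↔ y + (-x) ∈ ball (0:Rn n) ρ := by
      rw [mem_ball, mem_ball_zero_iff, ← sub_eq_add_neg, dist_eq_norm]
    have hval : dist x y ^ (-β) = ‖y + (-x)‖ ^ (-β) := by
      rw [← sub_eq_add_neg, ← dist_eq_norm, dist_comm]
    rw [Set.indicator_apply, Set.indicator_apply]
    by_cases h : y ∈ ball x ρ
    · rw [if_pos h, if_pos (hmem.1 h), hval]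
    · rw [if_neg h, if_neg (fun hc => h (hmem.2 hc))]
  rw [← lintegral_indicator measurableSet_ball, ← lintegral_indicator measurableSet_ball]
  calc ∫⁻ y, (ball x ρ).indicator (fun y => ENNReal.ofReal (dist x y ^ (-β))) y
      = ∫⁻ y, (ball (0:Rn n) ρ).indicator (fun z => ENNReal.ofReal (‖z‖ ^ (-β))) (y + (-x)) := by
        simp_rw [h1]
    _ = ∫⁻ z, (ball (0:Rn n) ρ).indicator (fun z => ENNReal.ofReal (‖z‖ ^ (-β))) z :=
        lintegral_add_right_eq_self _ (-x)

/-- Monotone extension of `G` used for measurability arguments. -/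
def Gbar (G : ℝ → ℝ) : ℝ → ℝ := fun t => G (max t 0)

lemma Gbar_abs (G : ℝ → ℝ) (t : ℝ) : Gbar G |t| = G |t| := by
  rw [Gbar, max_eq_left (abs_nonneg t)]

lemma YoungOK.Gbar_measurable {g G : ℝ → ℝ} {p q : ℝ} (hY : YoungOK g G p q) :
    Measurable (Gbar G) := by
  apply Monotone.measurable
  intro a b hab
  exact hY.G_monoOn (mem_Ici.2 (le_max_right a 0)) (mem_Ici.2 (le_max_right b 0))
    (max_le_max hab le_rfl)

lemma fracD_add (σ : ℝ) (u v : Rn n → ℝ) (x y : Rn n) :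
    fracD σ (fun z => u z + v z) x y = fracD σ u x y + fracD σ v x y := by
  simp only [fracD]; ring

lemma fracD_smul (σ c : ℝ) (u : Rn n → ℝ) (x y : Rn n) :
    fracD σ (fun z => c * u z) x y = c * fracD σ u x y := by
  simp only [fracD]; ring

lemma fracD_measurable {σ : ℝ} (hσ : 0 ≤ σ) (φ : Rn n → ℝ) (hφ : Continuous φ) :
    Measurable (fun z : Rn n × Rn n => fracD σ φ z.1 z.2) := by
  apply Measurable.div
  · exact ((hφ.comp continuous_fst).sub (hφ.comp continuous_snd)).measurable
  · exact ((Real.continuous_rpow_const hσ).comp continuous_dist).measurable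

lemma smooth_memWsG2 {g G : ℝ → ℝ} {p q s : ℝ} (hY : YoungOK g G p q)
    (hn : 1 ≤ n) (hs : s ∈ Ioo (0:ℝ) 1)
    {Ω Ω' : Set (Rn n)} (hΩo : IsOpen Ω) (hbΩ : Bornology.IsBounded Ω)
    (hbΩ' : Bornology.IsBounded Ω') (φ : Rn n → ℝ)
    (h1 : ContDiff ℝ (⊤ : ℕ∞) φ) (h2 : HasCompactSupport φ) : memWsG2 G s Ω Ω' φ := by
  haveI : Nonempty (Fin n) := ⟨⟨0, hn⟩⟩
  obtain ⟨M, hM⟩ := h2.exists_bound_of_continuous h1.continuous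
  have hM0 : 0 ≤ M := le_trans (norm_nonneg (φ 0)) (hM 0)
  have hMabs : ∀ x, |φ x| ≤ M := by intro x; simpa [Real.norm_eq_abs] using hM x
  obtain ⟨L, hL⟩ := ContDiff.lipschitzWith_of_hasCompactSupport h2 h1 (by simp)
  set A : ℝ := (L:ℝ) + 2*M + 1 with hA
  have hA0 : (0:ℝ) < A := by positivity
  set K : ℝ := A * g A + G A with hK
  have hgA : 0 ≤ g A := hY.g_nonneg A hA0.le
  have hGA : 0 ≤ G A := hY.G_nonneg hA0.le
  have hK0 : 0 ≤ K := add_nonneg (mul_nonneg hA0.le hgA) hGA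
  set β : ℝ := (n:ℝ) + s - 1 with hβ
  have hn1 : (1:ℝ) ≤ (n:ℝ) := by exact_mod_cast hn
  have hβ0 : 0 < β := by simp only [hβ]; linarith [hs.1]
  have hβn : β < n := by simp only [hβ]; linarith [hs.2]
  obtain ⟨R₁, hR₁⟩ := (hbΩ.union hbΩ').subset_ball (0 : Rn n)
  set ρ' : ℝ := max (2*R₁) 1 with hρ'
  have hρ'0 : (0:ℝ) < ρ' := lt_of_lt_of_le zero_lt_one (le_max_right _ _)
  have hsub : ∀ x ∈ Ω, Ω' ⊆ ball x ρ' := by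
    intro x hx y hy
    have h3 : x ∈ ball (0 : Rn n) R₁ := hR₁ (Or.inl hx)
    have h4 : y ∈ ball (0 : Rn n) R₁ := hR₁ (Or.inr hy)
    rw [mem_ball_zero_iff] at h3 h4
    rw [mem_ball]
    calc dist y x ≤ ‖y‖ + ‖x‖ := by
          rw [dist_eq_norm]; exact norm_sub_le y x
      _ < 2*R₁ := by linarith
      _ ≤ ρ' := le_max_left _ _
  have pointwise : ∀ x y : Rn n, G |fracD s φ x y| / dist x y ^ n ≤ K * dist x y ^ (-β) := by
    intro x y
    have hd0 : 0 ≤ dist x y := dist_nonneg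
    rcases eq_or_lt_of_le hd0 with h0 | hdpos
    · have hxy : x = y := by rwa [eq_comm, dist_eq_zero] at h0
      have hz : fracD s φ x y = 0 := by rw [fracD, hxy, sub_self, zero_div]
      rw [hz, abs_zero, hY.G_zero, zero_div, ← h0,
        Real.zero_rpow (neg_ne_zero.2 hβ0.ne'), mul_zero]
    · set d := dist x y with hd
      have hnum : |φ x - φ y| ≤ L * d := by
        have h5 := hL.dist_le_mul x y
        rwa [Real.dist_eq] at h5
      have hds : 0 < d ^ s := Real.rpow_pos_of_pos hdpos s
      have habs : |fracD s φ x y| = |φ x - φ y| / d ^ s := by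
        rw [fracD, abs_div, abs_of_pos hds]
      have hdn : (0:ℝ) < d ^ n := pow_pos hdpos n
      have hDnn : 0 ≤ |fracD s φ x y| := abs_nonneg _
      have hLA : (L:ℝ) ≤ A := by simp only [hA]; linarith
      rcases le_total d 1 with hd1 | hd1
      · have e1 : d / d ^ s = d ^ (1 - s) := by
          rw [Real.rpow_sub hdpos, Real.rpow_one]
        have h3 : |fracD s φ x y| ≤ A * d ^ (1-s) := by
          rw [habs]
          calc |φ x - φ y| / d ^ s ≤ (L * d) / d ^ s := by gcongr
            _ = (L:ℝ) * (d ^ (1-s)) := by rw [mul_div_assoc, e1]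
            _ ≤ A * d ^ (1-s) :=
                mul_le_mul_of_nonneg_right hLA (Real.rpow_nonneg hd0 _)
        have hds1 : d ^ (1-s) ≤ 1 := Real.rpow_le_one hd0 hd1 (by linarith [hs.2])
        have hτ0 : 0 ≤ A * d ^ (1-s) := by positivity
        have hτA : A * d ^ (1-s) ≤ A := by nlinarith
        have hG1 : G |fracD s φ x y| ≤ A * d^(1-s) * g A := by
          calc G |fracD s φ x y| ≤ G (A * d^(1-s)) :=
                hY.G_monoOn (mem_Ici.2 hDnn) (mem_Ici.2 hτ0) h3
            _ ≤ (A * d^(1-s)) * g (A * d^(1-s)) := hY.G_le_mul hτ0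
            _ ≤ (A * d^(1-s)) * g A :=
                mul_le_mul_of_nonneg_left
                  (hY.g_mono (mem_Ici.2 hτ0) (mem_Ici.2 hA0.le) hτA) hτ0
        have hexp : (1 - s) - (n:ℝ) = -β := by simp only [hβ]; ring
        calc G |fracD s φ x y| / d ^ n ≤ (A * d^(1-s) * g A) / d^n := by gcongr
          _ = (A * g A) * (d ^ (1-s) / d ^ ((n:ℕ):ℝ)) := by
              rw [Real.rpow_natCast d n]; ring
          _ = (A * g A) * d ^ (-β) := by
              rw [← Real.rpow_sub hdpos, hexp]
          _ ≤ K * d ^ (-β) := by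
              apply mul_le_mul_of_nonneg_right _ (Real.rpow_nonneg hd0 _)
              simp only [hK]; linarith
      · have h4 : |φ x - φ y| ≤ 2 * M := by
          calc |φ x - φ y| ≤ |φ x| + |φ y| := abs_sub _ _
            _ ≤ 2 * M := by linarith [hMabs x, hMabs y]
        have h5 : (1:ℝ) ≤ d ^ s := by
          rw [show (1:ℝ) = 1 ^ s from (Real.one_rpow s).symm]
          exact Real.rpow_le_rpow zero_le_one hd1 hs.1.le
        have h3 : |fracD s φ x y| ≤ A := by
          rw [habs]
          calc |φ x - φ y| / d ^ s ≤ (2*M) / d^s := by gcongr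
            _ ≤ (2*M) / 1 := div_le_div_of_nonneg_left (by linarith) zero_lt_one h5
            _ ≤ A := by rw [div_one]; simp only [hA]; linarith [NNReal.coe_nonneg L]
        have hG1 : G |fracD s φ x y| ≤ G A :=
          hY.G_monoOn (mem_Ici.2 hDnn) (mem_Ici.2 hA0.le) h3
        calc G |fracD s φ x y| / d ^ n ≤ G A / d ^ n := by gcongr
          _ = G A * d ^ (-((n:ℕ):ℝ)) := by
              rw [Real.rpow_neg hd0, Real.rpow_natCast, div_eq_mul_inv]
          _ ≤ G A * d ^ (-β) := by
              apply mul_le_mul_of_nonneg_left _ hGA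
              apply Real.rpow_le_rpow_of_exponent_le hd1
              simp only [hβ]; linarith [hs.2]
          _ ≤ K * d ^ (-β) := by
              apply mul_le_mul_of_nonneg_right _ (Real.rpow_nonneg hd0 _)
              have h6 : 0 ≤ A * g A := mul_nonneg hA0.le hgA
              simp only [hK]; linarith
  constructor
  · calc ∫⁻ x in Ω, ENNReal.ofReal (G |φ x|)
        ≤ ∫⁻ _ in Ω, ENNReal.ofReal (G M) := by
          apply lintegral_mono
          intro x
          exact ENNReal.ofReal_le_ofReal
            (hY.G_monoOn (mem_Ici.2 (abs_nonneg _)) (mem_Ici.2 hM0) (hMabs x))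
      _ = ENNReal.ofReal (G M) * volume Ω := setLIntegral_const _ _
      _ < ⊤ := ENNReal.mul_lt_top ENNReal.ofReal_lt_top hbΩ.measure_lt_top
  · have hI : ∫⁻ z in ball (0 : Rn n) ρ', ENNReal.ofReal (‖z‖ ^ (-β)) < ⊤ :=
      lint_rpow_ball_lt_top hn hβ0 hβn hρ'0
    calc ∫⁻ x in Ω, ∫⁻ y in Ω', ENNReal.ofReal (G |fracD s φ x y| / dist x y ^ n)
        ≤ ∫⁻ x in Ω, ∫⁻ y in Ω', ENNReal.ofReal (K * dist x y ^ (-β)) := by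
          apply lintegral_mono; intro x
          apply lintegral_mono; intro y
          exact ENNReal.ofReal_le_ofReal (pointwise x y)
      _ ≤ ∫⁻ _ in Ω, (ENNReal.ofReal K *
            ∫⁻ z in ball (0 : Rn n) ρ', ENNReal.ofReal (‖z‖ ^ (-β))) := by
          apply setLIntegral_mono' hΩo.measurableSet
          intro x hx
          calc ∫⁻ y in Ω', ENNReal.ofReal (K * dist x y ^ (-β))
              ≤ ∫⁻ y in ball x ρ', ENNReal.ofReal (K * dist x y ^ (-β)) :=
                lintegral_mono' (Measure.restrict_mono (hsub x hx) le_rfl) le_rfl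
            _ = ENNReal.ofReal K * ∫⁻ y in ball x ρ', ENNReal.ofReal (dist x y ^ (-β)) := by
                simp_rw [ENNReal.ofReal_mul hK0]
                rw [lintegral_const_mul' _ _ ENNReal.ofReal_ne_top]
            _ = ENNReal.ofReal K * ∫⁻ z in ball (0 : Rn n) ρ', ENNReal.ofReal (‖z‖ ^ (-β)) := by
                rw [lint_rpow_ball_dist]
      _ = (ENNReal.ofReal K *
            ∫⁻ z in ball (0 : Rn n) ρ', ENNReal.ofReal (‖z‖ ^ (-β))) * volume Ω :=
          setLIntegral_const _ _
      _ < ⊤ := ENNReal.mul_lt_top (ENNReal.mul_lt_top ENNReal.ofReal_lt_top hI)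
          hbΩ.measure_lt_top

lemma memWsG2_add_smooth {g G : ℝ → ℝ} {p q s : ℝ} (hY : YoungOK g G p q)
    (hn : 1 ≤ n) (hs : s ∈ Ioo (0:ℝ) 1)
    {Ω Ω' : Set (Rn n)} (hΩo : IsOpen Ω) (hbΩ : Bornology.IsBounded Ω)
    (hbΩ' : Bornology.IsBounded Ω')
    {u : Rn n → ℝ} (hu : memWsG2 G s Ω Ω' u) (c : ℝ) (φ : Rn n → ℝ)
    (h1 : ContDiff ℝ (⊤ : ℕ∞) φ) (h2 : HasCompactSupport φ) :
    memWsG2 G s Ω Ω' (fun x => u x + c * φ x) := by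
  obtain ⟨C, hC1, hC⟩ := hY.exists_doubling
  have hC0 : (0:ℝ) ≤ C := by linarith
  have hw1 : ContDiff ℝ (⊤ : ℕ∞) (fun z => c * φ z) := contDiff_const.mul h1
  have hw2 : HasCompactSupport (fun z => c * φ z) := h2.mul_left
  have hwW := smooth_memWsG2 hY hn hs hΩo hbΩ hbΩ' _ hw1 hw2
  -- pointwise bounds
  have key : ∀ a b : ℝ, ENNReal.ofReal (G |a + b|) ≤
      ENNReal.ofReal (C * G |a|) + ENNReal.ofReal (C * G |b|) := by
    intro a b
    have h3 : G |a + b| ≤ C * G |a| + C * G |b| := by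
      calc G |a + b| ≤ G (|a| + |b|) :=
            hY.G_monoOn (mem_Ici.2 (abs_nonneg _))
              (mem_Ici.2 (add_nonneg (abs_nonneg a) (abs_nonneg b))) (abs_add_le a b)
        _ ≤ C * G |a| + C * G |b| := hY.G_add_le hC hC1 (abs_nonneg a) (abs_nonneg b)
    exact le_trans (ENNReal.ofReal_le_ofReal h3) ENNReal.ofReal_add_le
  have keydiv : ∀ a b e : ℝ, 0 ≤ e → ENNReal.ofReal (G |a + b| / e) ≤
      ENNReal.ofReal (C * G |a| / e) + ENNReal.ofReal (C * G |b| / e) := by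
    intro a b e he
    have h3 : G |a + b| ≤ C * G |a| + C * G |b| := by
      calc G |a + b| ≤ G (|a| + |b|) :=
            hY.G_monoOn (mem_Ici.2 (abs_nonneg _))
              (mem_Ici.2 (add_nonneg (abs_nonneg a) (abs_nonneg b))) (abs_add_le a b)
        _ ≤ C * G |a| + C * G |b| := hY.G_add_le hC hC1 (abs_nonneg a) (abs_nonneg b)
    have h4 : G |a + b| / e ≤ C * G |a| / e + C * G |b| / e := by
      rw [← add_div, div_eq_mul_inv, div_eq_mul_inv]
      exact mul_le_mul_of_nonneg_right h3 (inv_nonneg.2 he)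
    exact le_trans (ENNReal.ofReal_le_ofReal h4) ENNReal.ofReal_add_le
  -- measurable majorant data
  have hGbar := hY.Gbar_measurable
  constructor
  · -- first component
    have hmeas : Measurable (fun x : Rn n => ENNReal.ofReal (C * G |c * φ x|)) := by
      have : (fun x : Rn n => ENNReal.ofReal (C * G |c * φ x|)) =
          (fun x : Rn n => ENNReal.ofReal (C * Gbar G |c * φ x|)) := by
        funext x; rw [Gbar_abs]
      rw [this]
      apply Measurable.ennreal_ofReal
      exact measurable_const.mul (hGbar.comp
        ((continuous_const.mul h1.continuous).measurable.abs))
    calc ∫⁻ x in Ω, ENNReal.ofReal (G |u x + c * φ x|)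
        ≤ ∫⁻ x in Ω, (ENNReal.ofReal (C * G |u x|) + ENNReal.ofReal (C * G |c * φ x|)) :=
          lintegral_mono (fun x => key (u x) (c * φ x))
      _ = (∫⁻ x in Ω, ENNReal.ofReal (C * G |u x|)) +
            ∫⁻ x in Ω, ENNReal.ofReal (C * G |c * φ x|) :=
          lintegral_add_right' _ hmeas.aemeasurable
      _ < ⊤ := by
          apply ENNReal.add_lt_top.2
          constructor
          · calc ∫⁻ x in Ω, ENNReal.ofReal (C * G |u x|)
                = ENNReal.ofReal C * ∫⁻ x in Ω, ENNReal.ofReal (G |u x|) := by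
                  simp_rw [ENNReal.ofReal_mul hC0]
                  exact lintegral_const_mul' _ _ ENNReal.ofReal_ne_top
              _ < ⊤ := ENNReal.mul_lt_top ENNReal.ofReal_lt_top hu.1
          · calc ∫⁻ x in Ω, ENNReal.ofReal (C * G |c * φ x|)
                = ENNReal.ofReal C * ∫⁻ x in Ω, ENNReal.ofReal (G |c * φ x|) := by
                  simp_rw [ENNReal.ofReal_mul hC0]
                  exact lintegral_const_mul' _ _ ENNReal.ofReal_ne_top
              _ < ⊤ := ENNReal.mul_lt_top ENNReal.ofReal_lt_top hwW.1
  · -- seminorm component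
    have hfrac : ∀ x y : Rn n, fracD s (fun z => u z + c * φ z) x y =
        fracD s u x y + fracD s (fun z => c * φ z) x y := by
      intro x y
      exact fracD_add s u (fun z => c * φ z) x y
    have hmeas2 : Measurable (fun z : Rn n × Rn n =>
        ENNReal.ofReal (C * G |fracD s (fun t => c * φ t) z.1 z.2| / dist z.1 z.2 ^ n)) := by
      have he : (fun z : Rn n × Rn n =>
          ENNReal.ofReal (C * G |fracD s (fun t => c * φ t) z.1 z.2| / dist z.1 z.2 ^ n)) =
          (fun z : Rn n × Rn n =>
          ENNReal.ofReal (C * Gbar G |fracD s (fun t => c * φ t) z.1 z.2| / dist z.1 z.2 ^ n)) := by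
        funext z; rw [Gbar_abs]
      rw [he]
      apply Measurable.ennreal_ofReal
      apply Measurable.div
      · exact measurable_const.mul (hGbar.comp
          ((fracD_measurable hs.1.le _ (continuous_const.mul h1.continuous)).abs))
      · exact measurable_dist.pow_const n
    calc ∫⁻ x in Ω, ∫⁻ y in Ω',
          ENNReal.ofReal (G |fracD s (fun z => u z + c * φ z) x y| / dist x y ^ n)
        ≤ ∫⁻ x in Ω, ∫⁻ y in Ω',
            (ENNReal.ofReal (C * G |fracD s u x y| / dist x y ^ n) +
             ENNReal.ofReal (C * G |fracD s (fun z => c * φ z) x y| / dist x y ^ n)) := by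
          apply lintegral_mono; intro x; apply lintegral_mono; intro y
          beta_reduce
          rw [hfrac x y]
          exact keydiv _ _ _ (pow_nonneg dist_nonneg n)
      _ = ∫⁻ x in Ω, ((∫⁻ y in Ω', ENNReal.ofReal (C * G |fracD s u x y| / dist x y ^ n)) +
            ∫⁻ y in Ω', ENNReal.ofReal (C * G |fracD s (fun z => c * φ z) x y| / dist x y ^ n)) := by
          apply lintegral_congr; intro x
          exact lintegral_add_right' _ (hmeas2.comp measurable_prodMk_left).aemeasurable
      _ = (∫⁻ x in Ω, ∫⁻ y in Ω', ENNReal.ofReal (C * G |fracD s u x y| / dist x y ^ n)) +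
            ∫⁻ x in Ω, ∫⁻ y in Ω',
              ENNReal.ofReal (C * G |fracD s (fun z => c * φ z) x y| / dist x y ^ n) := by
          apply lintegral_add_right'
          exact (Measurable.lintegral_prod_right
            (f := fun a b => ENNReal.ofReal
              (C * G |fracD s (fun z => c * φ z) a b| / dist a b ^ n)) hmeas2).aemeasurable
      _ < ⊤ := by
          apply ENNReal.add_lt_top.2
          constructor
          · calc ∫⁻ x in Ω, ∫⁻ y in Ω', ENNReal.ofReal (C * G |fracD s u x y| / dist x y ^ n)
                = ENNReal.ofReal C * ∫⁻ x in Ω, ∫⁻ y in Ω',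
                    ENNReal.ofReal (G |fracD s u x y| / dist x y ^ n) := by
                  simp_rw [mul_div_assoc, ENNReal.ofReal_mul hC0,
                    lintegral_const_mul' (ENNReal.ofReal C) _ ENNReal.ofReal_ne_top]
              _ < ⊤ := ENNReal.mul_lt_top ENNReal.ofReal_lt_top hu.2
          · calc ∫⁻ x in Ω, ∫⁻ y in Ω',
                  ENNReal.ofReal (C * G |fracD s (fun z => c * φ z) x y| / dist x y ^ n)
                = ENNReal.ofReal C * ∫⁻ x in Ω, ∫⁻ y in Ω',
                    ENNReal.ofReal (G |fracD s (fun z => c * φ z) x y| / dist x y ^ n) := by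
                  simp_rw [mul_div_assoc, ENNReal.ofReal_mul hC0,
                    lintegral_const_mul' (ENNReal.ofReal C) _ ENNReal.ofReal_ne_top]
              _ < ⊤ := ENNReal.mul_lt_top ENNReal.ofReal_lt_top hwW.2

lemma memWsG2_congr {G' : ℝ → ℝ} {s : ℝ} {Ω Ω' : Set (Rn n)} {u v : Rn n → ℝ}
    (h : ∀ x, u x = v x) (hu : memWsG2 G' s Ω Ω' u) : memWsG2 G' s Ω Ω' v :=
  (funext h : u = v) ▸ hu

lemma nlEnergy_smul (g : ℝ → ℝ) (k : Rn n → Rn n → ℝ) (s : ℝ) (u φ : Rn n → ℝ) (c : ℝ) :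
    nlEnergy g k s u (fun x => c * φ x) = c * nlEnergy g k s u φ := by
  unfold nlEnergy
  have h1 : ∀ x y : Rn n, oddg g (fracD s u x y) * fracD s (fun z => c * φ z) x y * k x y
      / dist x y ^ n = c * (oddg g (fracD s u x y) * fracD s φ x y * k x y / dist x y ^ n) := by
    intro x y; rw [fracD_smul]; ring
  simp_rw [h1, integral_const_mul]

lemma energy_zero_of_separated {g G : ℝ → ℝ} {p q s : ℝ} (hn : 1 ≤ n)
    (hs : s ∈ Ioo (0:ℝ) 1) (hY : YoungOK g G p q) {k : Rn n → Rn n → ℝ}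
    {Ω Ω' : Set (Rn n)} (hΩ : IsOpen Ω) (hbdd : Bornology.IsBounded Ω')
    (hsub : closure Ω ⊆ Ω')
    {ψ : Rn n → EReal} {ϑ : Rn n → ℝ} {u : Rn n → ℝ}
    (hu : SolvesObstacle g G k s Ω Ω' ψ ϑ u)
    (φ : Rn n → ℝ) (hφ1 : ContDiff ℝ (⊤ : ℕ∞) φ) (hφ2 : HasCompactSupport φ)
    (hφ3 : tsupport φ ⊆ Ω) {ε : ℝ} (hε : 0 < ε)
    (hsep : ∀ᵐ x : Rn n, x ∈ tsupport φ → ψ x ≤ ((u x - ε : ℝ) : EReal)) :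
    (∫ x : Rn n, ∫ y : Rn n,
        oddg g (fracD s u x y) * fracD s φ x y * k x y / dist x y ^ n) = 0 := by
  have hbΩ : Bornology.IsBounded Ω := hbdd.subset (subset_closure.trans hsub)
  obtain ⟨⟨hW2, hψu, hW20, hout⟩, hmin⟩ := hu
  obtain ⟨M, hM⟩ := hφ2.exists_bound_of_continuous hφ1.continuous
  have hM0 : 0 ≤ M := le_trans (norm_nonneg (φ 0)) (hM 0)
  have hMabs : ∀ x, |φ x| ≤ M := by intro x; simpa [Real.norm_eq_abs] using hM x
  set t : ℝ := ε / (M + 1) with htdef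
  have ht : 0 < t := div_pos hε (by linarith)
  have hψc : ∀ c : ℝ, |c| ≤ t →
      ∀ᵐ x ∂(volume.restrict Ω), ψ x ≤ ((u x + c * φ x : ℝ) : EReal) := by
    intro c hc
    rw [ae_restrict_iff' hΩ.measurableSet]
    have h1 : ∀ᵐ x : Rn n, x ∈ Ω → ψ x ≤ ((u x : ℝ) : EReal) :=
      (ae_restrict_iff' hΩ.measurableSet).1 hψu
    filter_upwards [h1, hsep] with x hx1 hx2 hxΩ
    by_cases hxs : x ∈ tsupport φ
    · have h3 : ψ x ≤ ((u x - ε : ℝ) : EReal) := hx2 hxs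
      apply le_trans h3
      rw [EReal.coe_le_coe_iff]
      have h4 : |c * φ x| ≤ ε := by
        calc |c * φ x| = |c| * |φ x| := abs_mul _ _
          _ ≤ t * M := mul_le_mul hc (hMabs x) (abs_nonneg _) ht.le
          _ ≤ t * (M + 1) := by nlinarith
          _ = ε := by rw [htdef]; field_simp
      linarith [(abs_le.1 h4).1]
    · have h0 : φ x = 0 := image_eq_zero_of_notMem_tsupport hxs
      rw [h0, mul_zero, add_zero]
      exact hx1 hxΩ
  have hadm : ∀ c : ℝ, |c| ≤ t → inAdmissible G s Ω Ω' ψ ϑ (fun x => u x + c * φ x) := by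
    intro c hc
    refine ⟨memWsG2_add_smooth hY hn hs hΩ hbΩ hbdd hW2 c φ hφ1 hφ2, hψc c hc, ⟨?_, ?_⟩, ?_⟩
    · exact memWsG2_congr (u := fun x => (u x - ϑ x) + c * φ x) (fun x => by ring)
        (memWsG2_add_smooth hY hn hs hΩ hbΩ hbdd hW20.1 c φ hφ1 hφ2)
    · intro ε' hε'
      obtain ⟨θ, hθ1, hθ2, hθ3, hθ4⟩ := hW20.2 ε' hε'
      have hsupp : tsupport (fun x => c * φ x) ⊆ tsupport φ := by
        apply closure_mono
        intro x hx
        simp only [mem_support] at hx ⊢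
        intro h0; exact hx (by rw [h0, mul_zero])
      refine ⟨fun x => θ x + c * φ x, hθ1.add (contDiff_const.mul hφ1),
        hθ2.add hφ2.mul_left, ?_, ?_⟩
      · exact subset_trans (tsupport_add _ _) (union_subset hθ3 (hsupp.trans hφ3))
      · have heq : (fun x => (u x + c * φ x - ϑ x) - (θ x + c * φ x)) =
            (fun x => (u x - ϑ x) - θ x) := by funext x; ring
        show luxNorm G s Ω Ω' (fun x => (u x + c * φ x - ϑ x) - (θ x + c * φ x)) < ε'
        rw [heq]
        exact hθ4
    · intro x hx
      have h0 : φ x = 0 :=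
        image_eq_zero_of_notMem_tsupport (fun hc' => hx (hsub (subset_closure (hφ3 hc'))))
      simp only [h0, mul_zero, add_zero]
      exact hout x hx
  have E1 := hmin _ (hadm t (by rw [abs_of_pos ht]))
  have E2 := hmin _ (hadm (-t) (by rw [abs_neg, abs_of_pos ht]))
  have r1 : (fun x => (u x + t * φ x) - u x) = (fun x => t * φ x) := by funext x; ring
  have r2 : (fun x => (u x + (-t) * φ x) - u x) = (fun x => (-t) * φ x) := by funext x; ring
  have E1' : 0 ≤ t * nlEnergy g k s u φ := by
    rw [← nlEnergy_smul g k s u φ t, ← r1]; exact E1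
  have E2' : 0 ≤ -t * nlEnergy g k s u φ := by
    rw [show (-t : ℝ) * nlEnergy g k s u φ = (-t) * nlEnergy g k s u φ from rfl,
      ← nlEnergy_smul g k s u φ (-t), ← r2]; exact E2
  have hE : nlEnergy g k s u φ = 0 := by nlinarith
  exact hE

end AuxLemmas

/-- Corollary 4.4: the solution to the obstacle problem is a weak
solution of `Lu = 0` in any ball `B_R ⊆ Ω` where `essinf_{B_R}(u − ψ) > 0`; in
particular, if `u` is lower semicontinuous and `ψ` is upper semicontinuous in `Ω`,
then `u` is a weak solution in the set `{x ∈ Ω : u(x) > ψ(x)}`. -/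
theorem obstacle_solution_solves_where_detached
    {n : ℕ} (hn : 1 ≤ n) (s p q Λ : ℝ) (hs : s ∈ Ioo (0:ℝ) 1)
    (g G : ℝ → ℝ) (hY : YoungOK g G p q)
    (k : Rn n → Rn n → ℝ) (hk : KernelOK k Λ)
    (Ω Ω' : Set (Rn n)) (hΩ : IsOpen Ω) (hΩ' : IsOpen Ω')
    (hbdd : Bornology.IsBounded Ω') (hcc : IsCompact (closure Ω))
    (hsub : closure Ω ⊆ Ω')
    (ψ : Rn n → EReal) (ϑ : Rn n → ℝ)
    (hϑ : memWsG2 G s Ω Ω' ϑ) (hϑ' : memLgs g s ϑ)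
    (u : Rn n → ℝ) (hu : SolvesObstacle g G k s Ω Ω' ψ ϑ u) :
    (∀ (x₀ : Rn n) (R : ℝ), 0 < R → ball x₀ R ⊆ Ω →
      0 < essInf (fun x => (u x : EReal) - ψ x) (volume.restrict (ball x₀ R)) →
      IsWeakSolEq g k s (ball x₀ R) u) ∧
    (LowerSemicontinuousOn u Ω → UpperSemicontinuousOn ψ Ω →
      IsWeakSolEq g k s {x | x ∈ Ω ∧ ψ x < (u x : EReal)} u) := by
  constructor
  · -- Part 1: balls with positive separation
    intro x₀ R hR hball hpos φ h1 h2 h3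
    obtain ⟨c, hc1, hc2⟩ := exists_between hpos
    have hae : ∀ᵐ x ∂(volume.restrict (ball x₀ R)),
        c < (fun x => (u x : EReal) - ψ x) x := ae_lt_of_lt_essInf hc2
    have hcB : c ≠ ⊥ := (bot_le.trans_lt hc1).ne'
    have hcT : c ≠ ⊤ := (hc2.trans_le le_top).ne
    set ε : ℝ := c.toReal with hεdef
    have hcc : (ε : EReal) = c := EReal.coe_toReal hcT hcB
    have hεpos : 0 < ε := by
      rw [← EReal.coe_pos, hcc]; exact hc1
    have claim : ∀ (a : EReal) (b : ℝ), c < (b : EReal) - a →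
        a ≤ ((b - ε : ℝ) : EReal) := by
      intro a b hab
      induction a using EReal.rec with
      | bot => exact bot_le
      | coe r =>
          rw [← EReal.coe_sub, ← hcc, EReal.coe_lt_coe_iff] at hab
          exact EReal.coe_le_coe_iff.2 (by linarith)
      | top =>
          rw [EReal.sub_top] at hab
          exact absurd hab not_lt_bot
    have hae2 : ∀ᵐ x : Rn n, x ∈ ball x₀ R → c < (u x : EReal) - ψ x :=
      (ae_restrict_iff' measurableSet_ball).1 hae
    have hsep : ∀ᵐ x : Rn n, x ∈ tsupport φ → ψ x ≤ ((u x - ε : ℝ) : EReal) := by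
      filter_upwards [hae2] with x hx hxs
      exact claim (ψ x) (u x) (hx (h3 hxs))
    exact energy_zero_of_separated hn hs hY hΩ hbdd hsub hu φ h1 h2
      (h3.trans hball) hεpos hsep
  · -- Part 2: lower/upper semicontinuity
    intro hlsc husc φ h1 h2 h3
    have hφΩ : tsupport φ ⊆ Ω := fun x hx => (h3 hx).1
    have hgap : ∀ x ∈ tsupport φ, ∃ ε : ℝ, 0 < ε ∧
        {y : Rn n | ψ y ≤ ((u y - ε : ℝ) : EReal)} ∈ 𝓝 x := by
      intro x hx
      obtain ⟨hxΩ, hxlt⟩ := h3 hx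
      obtain ⟨c', hc1', hc2'⟩ := exists_between hxlt
      have hcT : c' ≠ ⊤ := (hc2'.trans_le le_top).ne
      have hcB : c' ≠ ⊥ := (bot_le.trans_lt hc1').ne'
      set a : ℝ := c'.toReal with hadef
      have hac : (a : EReal) = c' := EReal.coe_toReal hcT hcB
      have haux : a < u x := by
        rw [← hac] at hc2'
        exact EReal.coe_lt_coe_iff.1 hc2'
      obtain ⟨b, hb1, hb2⟩ := exists_between haux
      have hnn : 𝓝[Ω] x = 𝓝 x := nhdsWithin_eq_nhds.2 (hΩ.mem_nhds hxΩ)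
      refine ⟨b - a, by linarith, ?_⟩
      have hev : ∀ᶠ y in 𝓝 x, ψ y ≤ ((u y - (b - a) : ℝ) : EReal) := by
        rw [← hnn]
        have hev1 : ∀ᶠ y in 𝓝[Ω] x, ψ y < ((a : ℝ) : EReal) :=
          husc x hxΩ ((a : ℝ) : EReal) (by rw [hac]; exact hc1')
        have hev2 : ∀ᶠ y in 𝓝[Ω] x, b < u y := hlsc x hxΩ b hb2
        filter_upwards [hev1, hev2] with y hy1 hy2
        exact le_trans hy1.le (EReal.coe_le_coe_iff.2 (by linarith))
      exact hev
    choose! εf hεf hU using hgap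
    obtain ⟨T, hT1, hT2⟩ := IsCompact.elim_nhds_subcover h2
      (fun x => {y : Rn n | ψ y ≤ ((u y - εf x : ℝ) : EReal)}) hU
    rcases T.eq_empty_or_nonempty with hTe | hTne
    · -- tsupport φ is empty
      have hempty : ∀ x : Rn n, x ∈ tsupport φ → ψ x ≤ ((u x - 1 : ℝ) : EReal) := by
        intro x hx
        have := hT2 hx
        rw [hTe] at this
        simp at this
      exact energy_zero_of_separated hn hs hY hΩ hbdd hsub hu φ h1 h2 hφΩ one_pos
        (Eventually.of_forall hempty)
    · set ε : ℝ := T.inf' hTne εf with hεdef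
      have hεpos : 0 < ε := Finset.lt_inf'_iff hTne |>.2 (fun i hi => hεf i (hT1 i hi))
      have hsep : ∀ x : Rn n, x ∈ tsupport φ → ψ x ≤ ((u x - ε : ℝ) : EReal) := by
        intro x hx
        obtain ⟨i, hiT, hxi⟩ := Set.mem_iUnion₂.1 (hT2 hx)
        have h5 : ψ x ≤ ((u x - εf i : ℝ) : EReal) := hxi
        apply le_trans h5
        apply EReal.coe_le_coe_iff.2
        have : ε ≤ εf i := Finset.inf'_le εf hiT
        linarith
      exact energy_zero_of_separated hn hs hY hΩ hbdd hsub hu φ h1 h2 hφΩ hεpos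
        (Eventually.of_forall hsep)
end
end

section
/- For all a, b ∈ ℝ it holds that g(|a−b|)·sgn(a−b) ≤ 2·g(a₊ + b₋) − (p/q)·2^{1−q}·g(b₊), where a₊ = max{a,0}, b₊ = max{b,0}, b₋ = max{−b,0}, and g(|a−b|)·sgn(a−b) is interpreted as 0 when a = b. -/
open MeasureTheory Metric Set Filter Function
open scoped ENNReal Topology NNReal

noncomputable section

variable {n : ℕ}

/-- Auxiliary doubling inequality: `g(2m) ≤ (q/p)·2^{q−1}·g(m)` for `m > 0`. -/
lemma young_doubling (g G : ℝ → ℝ) (p q : ℝ) (hY : YoungOK g G p q)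
    {m : ℝ} (hm : 0 < m) : g (2 * m) ≤ (q / p) * (2:ℝ) ^ (q - 1) * g m := by
  have hp0 : (0:ℝ) < p := lt_trans one_pos hY.one_lt_p
  have hq0 : (0:ℝ) < q := lt_of_lt_of_le hp0 hY.p_le_q
  -- a globally monotone extension of `g`
  set gm : ℝ → ℝ := fun t => g (max t 0) with hgm_def
  have hmono : Monotone gm := by
    intro x y hxy
    exact hY.g_strictMono.monotoneOn (le_max_right x 0) (le_max_right y 0)
      (max_le_max hxy le_rfl)
  set Gt : ℝ → ℝ := fun x => ∫ τ in (0:ℝ)..x, gm τ with hGt_def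
  have hGt_eq : ∀ x, 0 ≤ x → G x = Gt x := by
    intro x hx
    rw [hY.G_eq x hx]
    apply intervalIntegral.integral_congr
    intro τ hτ
    rw [uIcc_of_le hx] at hτ
    simp only [hgm_def, max_eq_left hτ.1]
  have hint : ∀ a b : ℝ, IntervalIntegrable gm MeasureTheory.volume a b :=
    fun a b => hmono.intervalIntegrable
  have hcont : Continuous Gt := intervalIntegral.continuous_primitive hint 0
  have hright : ∀ τ : ℝ, HasDerivWithinAt Gt (Function.rightLim gm τ) (Ioi τ) τ := by
    intro τ
    have h := intervalIntegral.integral_hasDerivWithinAt_of_tendsto_ae_right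
      (f := gm) (a := 0) (b := τ) (hint 0 τ) (s := Ici τ) (t := Ioi τ)
      (hmono.measurable.stronglyMeasurable.stronglyMeasurableAtFilter)
      ((hmono.tendsto_rightLim τ).mono_left inf_le_left)
    exact h.mono Ioi_subset_Ici_self
  have hkey : ∀ τ : ℝ, 0 < τ → τ * Function.rightLim gm τ ≤ q * Gt τ := by
    intro τ hτ
    have h1 : Filter.Tendsto (fun x : ℝ => x * gm x) (nhdsWithin τ (Ioi τ))
        (nhds (τ * Function.rightLim gm τ)) :=
      (Filter.tendsto_id.mono_left nhdsWithin_le_nhds).mul (hmono.tendsto_rightLim τ)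
    have h2 : Filter.Tendsto (fun x : ℝ => q * Gt x) (nhdsWithin τ (Ioi τ))
        (nhds (q * Gt τ)) :=
      ((continuous_const.mul hcont).tendsto τ).mono_left nhdsWithin_le_nhds
    refine le_of_tendsto_of_tendsto h1 h2 ?_
    filter_upwards [self_mem_nhdsWithin] with x hx
    have hx0 : (0:ℝ) ≤ x := le_of_lt (lt_trans hτ hx)
    have hgx : gm x = g x := by simp only [hgm_def, max_eq_left hx0]
    rw [hgx, ← hGt_eq x hx0]
    exact hY.growth_upper x hx0
  -- the ratio `Gt τ / τ^q` is nonincreasing: compare at `m` and `2m`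
  have h2m : (0:ℝ) < 2 * m := by linarith
  set H : ℝ → ℝ := fun τ => Gt τ * τ ^ (-q) with hH_def
  set D : ℝ → ℝ := fun τ =>
    Function.rightLim gm τ * τ ^ (-q) + Gt τ * (-q * τ ^ (-q - 1)) with hD_def
  have hm2 : m ≤ 2 * m := by linarith
  have hHd : ∀ x ∈ Ioo m (2 * m), HasDerivWithinAt H (D x) (Ioi x) x := by
    intro x hx
    have hx0 : (0:ℝ) < x := lt_trans hm hx.1
    have h2 : HasDerivWithinAt (fun τ : ℝ => τ ^ (-q)) (-q * x ^ (-q - 1)) (Ioi x) x :=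
      (Real.hasDerivAt_rpow_const (p := -q) (Or.inl hx0.ne')).hasDerivWithinAt
    exact (hright x).mul h2
  have hDneg : ∀ x ∈ Ioo m (2 * m), D x ≤ 0 := by
    intro x hx
    have hx0 : (0:ℝ) < x := lt_trans hm hx.1
    have e1 : x ^ (-q) = x ^ (-q - 1) * x := by
      rw [show -q = -q - 1 + 1 by ring, Real.rpow_add_one hx0.ne']
      ring_nf
    have e2 : D x = x ^ (-q - 1) * (x * Function.rightLim gm x - q * Gt x) := by
      rw [hD_def]; dsimp only; rw [e1]; ring
    rw [e2]
    exact mul_nonpos_of_nonneg_of_nonpos (Real.rpow_nonneg hx0.le _)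
      (by linarith [hkey x hx0])
  have hHcont : ContinuousOn H (Icc m (2 * m)) := by
    apply hcont.continuousOn.mul
    intro x hx
    exact (Real.continuousAt_rpow_const x (-q)
      (Or.inl (lt_of_lt_of_le hm hx.1).ne')).continuousWithinAt
  have hHle : H (2 * m) - H m ≤ ∫ y in m..(2 * m), (0:ℝ) := by
    apply intervalIntegral.sub_le_integral_of_hasDeriv_right_of_le hm2 hHcont hHd
    · exact MeasureTheory.integrableOn_const (by
        simp [Real.volume_Icc])
    · exact hDneg
  rw [intervalIntegral.integral_zero] at hHle
  have hHle' : Gt (2 * m) * (2 * m) ^ (-q) ≤ Gt m * m ^ (-q) := by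
    have := hHle; rw [hH_def] at this; dsimp only at this; linarith
  have hmul := mul_le_mul_of_nonneg_right hHle' (Real.rpow_nonneg h2m.le q)
  have hL : Gt (2 * m) * (2 * m) ^ (-q) * (2 * m) ^ q = Gt (2 * m) := by
    rw [mul_assoc, ← Real.rpow_add h2m, neg_add_cancel, Real.rpow_zero, mul_one]
  have hval : m ^ (-q) * (2 * m) ^ q = (2:ℝ) ^ q := by
    rw [Real.mul_rpow (by norm_num : (0:ℝ) ≤ 2) hm.le, mul_comm ((2:ℝ) ^ q) (m ^ q),
      ← mul_assoc, ← Real.rpow_add hm, neg_add_cancel, Real.rpow_zero, one_mul]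
  have hratio : Gt (2 * m) ≤ (2:ℝ) ^ q * Gt m := by
    rw [hL, mul_assoc, hval] at hmul
    linarith
  -- combine the growth conditions
  have hG2 : G (2 * m) ≤ (2:ℝ) ^ q * G m := by
    rw [hGt_eq _ h2m.le, hGt_eq _ hm.le]; exact hratio
  have h1 : (2 * m) * g (2 * m) ≤ q * G (2 * m) := hY.growth_upper _ h2m.le
  have h3 : p * G m ≤ m * g m := hY.growth_lower _ hm.le
  have hB0 : (0:ℝ) < (2:ℝ) ^ q := Real.rpow_pos_of_pos (by norm_num) q
  have hB1 : (2:ℝ) ^ (q - 1) = (2:ℝ) ^ q / 2 := by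
    rw [Real.rpow_sub (by norm_num : (0:ℝ) < 2), Real.rpow_one]
  rw [hB1]
  rw [div_mul_div_comm, div_mul_eq_mul_div, le_div_iff₀ (by positivity : (0:ℝ) < p * 2)]
  -- goal : g (2*m) * (p * 2) ≤ q * (2^q * g m)  -- roughly; finish by nlinarith
  nlinarith [mul_le_mul_of_nonneg_left h3 (mul_pos hq0 hB0).le,
    mul_le_mul_of_nonneg_left hG2 hq0.le,
    mul_le_mul_of_nonneg_left h1 hp0.le, mul_pos hp0 hm]

/-- Lemma A.1, an algebraic inequality:
`g(|a−b|)·sgn(a−b) ≤ 2·g(a₊ + b₋) − (p/q)·2^{1−q}·g(b₊)` for all `a, b ∈ ℝ`. -/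
theorem algebraic_inequality_tail
    (g G : ℝ → ℝ) (p q : ℝ) (hY : YoungOK g G p q) (a b : ℝ) :
    oddg g (a - b) ≤
      2 * g (max a 0 + max (-b) 0) - (p / q) * (2:ℝ) ^ (1 - q) * g (max b 0) := by
  have hp0 : (0:ℝ) < p := lt_trans one_pos hY.one_lt_p
  have hq0 : (0:ℝ) < q := lt_of_lt_of_le hp0 hY.p_le_q
  have hq1 : (1:ℝ) < q := lt_of_lt_of_le hY.one_lt_p hY.p_le_q
  have mono : MonotoneOn g (Ici 0) := hY.g_strictMono.monotoneOn
  set A : ℝ := max a 0 + max (-b) 0 with hA_def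
  have hA0 : (0:ℝ) ≤ A := add_nonneg (le_max_right _ _) (le_max_right _ _)
  have hb0 : (0:ℝ) ≤ max b 0 := le_max_right _ _
  have hgA : 0 ≤ g A := hY.g_nonneg _ hA0
  have hgb0 : 0 ≤ g (max b 0) := hY.g_nonneg _ hb0
  set c : ℝ := (p / q) * (2:ℝ) ^ (1 - q) with hc_def
  have hcnn : 0 ≤ c := by positivity
  have hc1 : c ≤ 1 := by
    have h1 : p / q ≤ 1 := (div_le_one hq0).2 hY.p_le_q
    have h2 : (2:ℝ) ^ (1 - q) ≤ 1 :=
      Real.rpow_le_one_of_one_le_of_nonpos one_le_two (by linarith)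
    calc c ≤ 1 * 1 := mul_le_mul h1 h2 (Real.rpow_nonneg (by norm_num) _) zero_le_one
    _ = 1 := by norm_num
  rcases le_or_gt b a with hba | hab
  · -- case b ≤ a
    have hbA : max b 0 ≤ A := by
      have : max b 0 ≤ max a 0 := max_le_max hba le_rfl
      have h2 : max a 0 ≤ A := le_add_of_nonneg_right (le_max_right _ _)
      linarith
    have hgb : g (max b 0) ≤ g A := mono hb0 hA0 hbA
    have hL : oddg g (a - b) ≤ g A := by
      rcases eq_or_lt_of_le hba with heq | hlt
      · rw [heq]
        simp [oddg, Real.sign_zero]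
        exact hgA
      · have hpos : 0 < a - b := sub_pos.2 hlt
        have he : oddg g (a - b) = g (a - b) := by
          rw [oddg, Real.sign_of_pos hpos, abs_of_pos hpos, one_mul]
        rw [he]
        apply mono hpos.le hA0
        have h1 : a ≤ max a 0 := le_max_left _ _
        have h2 : -b ≤ max (-b) 0 := le_max_left _ _
        rw [hA_def]; linarith
    have hfinal : c * g (max b 0) ≤ g A := by
      calc c * g (max b 0) ≤ 1 * g A := mul_le_mul hc1 hgb hgb0 zero_le_one
      _ = g A := one_mul _
    linarith
  · -- case a < b
    set t : ℝ := b - a with ht_def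
    have ht0 : 0 < t := sub_pos.2 hab
    have hgt0 : 0 ≤ g t := hY.g_nonneg _ ht0.le
    have hL : oddg g (a - b) = -g t := by
      have hneg : a - b < 0 := by rw [ht_def] at ht0; linarith
      rw [oddg, Real.sign_of_neg hneg, abs_of_neg hneg,
        show -(a - b) = t by rw [ht_def]; ring]
      ring
    set m : ℝ := max A t with hm_def
    have hm0 : 0 < m := lt_of_lt_of_le ht0 (le_max_right _ _)
    have hbAt : max b 0 ≤ 2 * m := by
      have h1 : max b 0 ≤ A + t := by
        rcases le_total b 0 with h | h
        · rw [max_eq_right h]; exact add_nonneg hA0 ht0.le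
        · rw [max_eq_left h]
          have h2 : a ≤ max a 0 := le_max_left _ _
          have h3 : (0:ℝ) ≤ max (-b) 0 := le_max_right _ _
          rw [hA_def, ht_def]; linarith
      have h2 : A ≤ m := le_max_left _ _
      have h3 : t ≤ m := le_max_right _ _
      linarith
    have hdb : g (2 * m) ≤ (q / p) * (2:ℝ) ^ (q - 1) * g m := young_doubling g G p q hY hm0
    have hgb2 : g (max b 0) ≤ g (2 * m) := mono hb0 (mem_Ici.mpr (by linarith : (0:ℝ) ≤ 2*m)) hbAt
    have hgm : g m ≤ g A + g t := by
      rcases le_total A t with h | h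
      · rw [hm_def, max_eq_right h]; linarith
      · rw [hm_def, max_eq_left h]; linarith
    have hcc : c * ((q / p) * (2:ℝ) ^ (q - 1)) = 1 := by
      have e1 : (2:ℝ) ^ (1 - q) * (2:ℝ) ^ (q - 1) = 1 := by
        rw [← Real.rpow_add (by norm_num : (0:ℝ) < 2)]
        norm_num
      have e2 : p / q * (q / p) = 1 := by field_simp
      calc c * ((q / p) * (2:ℝ) ^ (q - 1))
          = (p / q * (q / p)) * ((2:ℝ) ^ (1 - q) * (2:ℝ) ^ (q - 1)) := by
            rw [hc_def]; ring
      _ = 1 := by rw [e1, e2, mul_one]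
    have hfinal : c * g (max b 0) ≤ g A + g t := by
      calc c * g (max b 0) ≤ c * g (2 * m) := mul_le_mul_of_nonneg_left hgb2 hcnn
      _ ≤ c * ((q / p) * (2:ℝ) ^ (q - 1) * g m) := mul_le_mul_of_nonneg_left hdb hcnn
      _ = (c * ((q / p) * (2:ℝ) ^ (q - 1))) * g m := by ring
      _ = g m := by rw [hcc, one_mul]
      _ ≤ g A + g t := hgm
    rw [hL]
    linarith
end
end
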